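/- arXiv:1302.2441 — 2 statements merged into one kernel-verified Lean document; each statement's English description precedes it below -/
import Mathlib

section
/- For every λ ∈ P^m_n and all 1 ≤ i ≤ j ≤ n, one has 0 ≤ k_{i,j}(λ) ≤ m; that is, all recursively defined entries of the tableau of λ are nonnegative integers not exceeding m. -/
/-- `lam` (indexed `1,…,n`) is a type-A partition of size `(n,m)`:
weakly decreasing with `0 ≤ lam i ≤ m (n - i + 1)` for `1 ≤ i ≤ n`. -/
def IsTypeAPartition (n m : ℕ) (lam : ℕ → ℤ) : Prop :=
  (∀ i : ℕ, 1 ≤ i → i ≤ n → 0 ≤ lam i ∧ lam i ≤ (m : ℤ) * ((n : ℤ) - (i : ℤ) + 1)) ∧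
  (∀ i : ℕ, 1 ≤ i → i < n → lam (i + 1) ≤ lam i)

/-- `K` satisfies, on the triangular domain `1 ≤ i ≤ j ≤ n`, the defining recursion of
the entries `k_{i,j}(lam)`:
`k_{i,j} = min(m, ⌈(lam_i − Σ_{l=j+1}^n k_{i,l} + Σ_{l=i+1}^j k_{l,j})/(j−i+1)⌉)`.
(This recursion is well founded and determines `K` uniquely on the domain.) -/
def TableauRec (n m : ℕ) (lam : ℕ → ℤ) (K : ℕ → ℕ → ℤ) : Prop :=
  ∀ i j : ℕ, 1 ≤ i → i ≤ j → j ≤ n →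
    K i j = min (m : ℤ)
      ⌈(((lam i - ∑ l ∈ Finset.Icc (j + 1) n, K i l
          + ∑ l ∈ Finset.Icc (i + 1) j, K l j : ℤ) : ℚ)
        / ((j : ℚ) - (i : ℚ) + 1))⌉

private lemma sum_Icc_split' (f : ℕ → ℤ) {a b : ℕ} (h : a ≤ b) :
    ∑ t ∈ Finset.Icc a b, f t = f a + ∑ t ∈ Finset.Icc (a + 1) b, f t := by
  have h1 : Finset.Icc a b = insert a (Finset.Icc (a + 1) b) := by
    ext x; simp only [Finset.mem_Icc, Finset.mem_insert]; omega
  rw [h1, Finset.sum_insert (by simp only [Finset.mem_Icc]; omega)]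

private lemma ceil_div_nonneg' {a D : ℤ} (hD : 0 < D) (ha : 0 ≤ a) :
    0 ≤ ⌈(a : ℚ) / (D : ℚ)⌉ :=
  Int.ceil_nonneg (div_nonneg (by exact_mod_cast ha) (by exact_mod_cast hD.le))

private lemma ceil_div_le' {a D b : ℤ} (hD : 0 < D) (h : a ≤ D * b) :
    ⌈(a : ℚ) / (D : ℚ)⌉ ≤ b := by
  rw [Int.ceil_le, div_le_iff₀ (by exact_mod_cast hD : (0:ℚ) < (D:ℚ))]
  exact_mod_cast (by linarith : a ≤ b * D)

private lemma le_mul_ceil' {a D : ℤ} (hD : 0 < D) :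
    a ≤ D * ⌈(a : ℚ) / (D : ℚ)⌉ := by
  have h := Int.le_ceil ((a : ℚ) / (D : ℚ))
  rw [div_le_iff₀ (by exact_mod_cast hD : (0:ℚ) < (D:ℚ))] at h
  have h2 : (a : ℚ) ≤ ((D * ⌈(a : ℚ) / (D : ℚ)⌉ : ℤ) : ℚ) := by push_cast; linarith
  exact_mod_cast h2

/-- For every `lam ∈ P^m_n` and all `1 ≤ i ≤ j ≤ n`, one has `0 ≤ k_{i,j}(lam) ≤ m`. -/
theorem tableau_entries_bounded (n m : ℕ) (hn : 1 ≤ n) (hm : 1 ≤ m)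
    (lam : ℕ → ℤ) (hlam : IsTypeAPartition n m lam)
    (K : ℕ → ℕ → ℤ) (hK : TableauRec n m lam K) :
    ∀ i j : ℕ, 1 ≤ i → i ≤ j → j ≤ n → 0 ≤ K i j ∧ K i j ≤ (m : ℤ) := by
  suffices H : ∀ N i j, 1 ≤ i → i ≤ j → j ≤ n → (n+1)*(n-j)+(n-i) ≤ N →
      ((0 ≤ K i j ∧ K i j ≤ (m:ℤ)) ∧
       (∑ t ∈ Finset.Icc j n, K i t ≤ lam i) ∧
       (i < j → lam (i+1) - ∑ t ∈ Finset.Icc j n, K (i+1) t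
          ≤ lam i - ∑ t ∈ Finset.Icc j n, K i t)) by
    intro i j h1 h2 h3
    exact (H ((n+1)*(n-j)+(n-i)) i j h1 h2 h3 le_rfl).1
  intro N
  induction N using Nat.strong_induction_on with
  | _ N IH =>
  intro i j hi hij hjn hN
  have get : ∀ i' j', 1 ≤ i' → i' ≤ j' → j' ≤ n →
      (n+1)*(n-j') + (n-i') < N →
      ((0 ≤ K i' j' ∧ K i' j' ≤ (m:ℤ)) ∧
       (∑ t ∈ Finset.Icc j' n, K i' t ≤ lam i') ∧
       (i' < j' → lam (i'+1) - ∑ t ∈ Finset.Icc j' n, K (i'+1) t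
          ≤ lam i' - ∑ t ∈ Finset.Icc j' n, K i' t)) := by
    intro i' j' a b c h
    exact IH _ h i' j' a b c le_rfl
  -- measure inequalities
  have hrow : ∀ l, i < l → l ≤ j → (n+1)*(n-j) + (n-l) < N :=
    fun l hl hl2 => lt_of_lt_of_le (Nat.add_lt_add_left (by omega) _) hN
  have hcol : j < n → ∀ l : ℕ, (n+1)*(n-(j+1)) + (n-l) < N := by
    intro hjn' l
    have e2 : (n+1)*(n-j) + (n-i) = (n+1)*(n-(j+1)) + ((n+1)+(n-i)) := by
      have e : n - j = (n-(j+1)) + 1 := by omega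
      rw [e, Nat.mul_add, Nat.mul_one, Nat.add_assoc]
    rw [e2] at hN
    exact lt_of_lt_of_le (Nat.add_lt_add_left (by omega) _) hN
  -- the one-step monotonicity at column j+1
  have step : ∀ l, 1 ≤ l → l < j →
      lam (l+1) - ∑ t ∈ Finset.Icc (j+1) n, K (l+1) t
        ≤ lam l - ∑ t ∈ Finset.Icc (j+1) n, K l t := by
    intro l hl1 hlj
    rcases eq_or_lt_of_le hjn with hjn' | hjn'
    · have he : Finset.Icc (j+1) n = ∅ := Finset.Icc_eq_empty (by omega)
      rw [he]
      simpa using hlam.2 l hl1 (by omega)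
    · exact (get l (j+1) hl1 (by omega) (by omega) (hcol hjn' l)).2.2 (by omega)
  have chain : ∀ a, 1 ≤ a → ∀ b, a ≤ b → b ≤ j →
      lam b - ∑ t ∈ Finset.Icc (j+1) n, K b t
        ≤ lam a - ∑ t ∈ Finset.Icc (j+1) n, K a t := by
    intro a ha b hb
    induction b, hb using Nat.le_induction with
    | base => exact fun _ => le_rfl
    | succ b hb ih =>
      intro hbj
      exact le_trans (step b (by omega) (by omega)) (ih (by omega))
  -- nonnegativity of the row slack x = lam i - S i
  have hx0 : 0 ≤ lam i - ∑ t ∈ Finset.Icc (j+1) n, K i t := by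
    rcases eq_or_lt_of_le hjn with hjn' | hjn'
    · have he : Finset.Icc (j+1) n = ∅ := Finset.Icc_eq_empty (by omega)
      rw [he]
      simpa using (hlam.1 i hi (by omega)).1
    · have := (get i (j+1) hi (by omega) (by omega) (hcol hjn' i)).2.1
      linarith
  -- bounds for entries of column j below row i
  have hbig : ∀ l, i < l → l ≤ j →
      (0 ≤ K l j ∧ K l j ≤ (m:ℤ)) ∧
      K l j ≤ lam l - ∑ t ∈ Finset.Icc (j+1) n, K l t := by
    intro l hil hlj
    have G := get l j (by omega) hlj hjn (hrow l hil hlj)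
    refine ⟨G.1, ?_⟩
    have h2 := G.2.1
    rw [sum_Icc_split' (fun t => K l t) hjn] at h2
    linarith
  -- bounds on T
  have hT0 : 0 ≤ ∑ l ∈ Finset.Icc (i+1) j, K l j := by
    refine Finset.sum_nonneg fun l hl => ?_
    have := Finset.mem_Icc.mp hl
    exact ((hbig l (by omega) (by omega)).1).1
  have hTx : ∑ l ∈ Finset.Icc (i+1) j, K l j
      ≤ ((j:ℤ) - (i:ℤ)) * (lam i - ∑ t ∈ Finset.Icc (j+1) n, K i t) := by
    calc ∑ l ∈ Finset.Icc (i+1) j, K l j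
        ≤ ∑ _l ∈ Finset.Icc (i+1) j, (lam i - ∑ t ∈ Finset.Icc (j+1) n, K i t) := by
          refine Finset.sum_le_sum fun l hl => ?_
          have hm' := Finset.mem_Icc.mp hl
          exact le_trans (hbig l (by omega) (by omega)).2
            (chain i hi l (by omega) (by omega))
      _ = ((j:ℤ) - (i:ℤ)) * (lam i - ∑ t ∈ Finset.Icc (j+1) n, K i t) := by
          rw [Finset.sum_const, Nat.card_Icc, nsmul_eq_mul]
          congr 1
          have : j + 1 - (i + 1) = j - i := by omega
          rw [this]
          omega
  -- rewrite the recursion with an integer denominator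
  have hden : (j : ℚ) - (i : ℚ) + 1 = (((j:ℤ) - (i:ℤ) + 1 : ℤ) : ℚ) := by push_cast; ring
  have hD : 0 < (j:ℤ) - (i:ℤ) + 1 := by omega
  have hKij := hK i j hi hij hjn
  rw [hden] at hKij
  have hceilx : ⌈(((lam i - ∑ l ∈ Finset.Icc (j + 1) n, K i l
          + ∑ l ∈ Finset.Icc (i + 1) j, K l j : ℤ) : ℚ)
        / (((j:ℤ) - (i:ℤ) + 1 : ℤ) : ℚ))⌉
      ≤ lam i - ∑ t ∈ Finset.Icc (j+1) n, K i t := by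
    refine ceil_div_le' hD ?_
    nlinarith [hTx, hx0]
  refine ⟨⟨?_, ?_⟩, ?_, ?_⟩
  · rw [hKij]
    exact le_min (by positivity) (ceil_div_nonneg' hD (by linarith))
  · rw [hKij]; exact min_le_left _ _
  · rw [sum_Icc_split' (fun t => K i t) hjn]
    have : K i j ≤ lam i - ∑ t ∈ Finset.Icc (j+1) n, K i t := by
      rw [hKij]; exact le_trans (min_le_right _ _) hceilx
    linarith
  · intro hij2
    rw [sum_Icc_split' (fun t => K i t) hjn, sum_Icc_split' (fun t => K (i+1) t) hjn]
    -- notation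
    have hx1x : lam (i+1) - ∑ t ∈ Finset.Icc (j+1) n, K (i+1) t
        ≤ lam i - ∑ t ∈ Finset.Icc (j+1) n, K i t :=
      chain i hi (i+1) (by omega) (by omega)
    have hB := hbig (i+1) (by omega) (by omega)
    have hK1m : K (i+1) j ≤ (m:ℤ) := hB.1.2
    have hK10 : 0 ≤ K (i+1) j := hB.1.1
    have hK1x1 : K (i+1) j ≤ lam (i+1) - ∑ t ∈ Finset.Icc (j+1) n, K (i+1) t := hB.2
    have hTsplit : ∑ l ∈ Finset.Icc (i+1) j, K l j
        = K (i+1) j + ∑ l ∈ Finset.Icc (i+1+1) j, K l j :=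
      sum_Icc_split' (fun l => K l j) (show i+1 ≤ j by omega)
    have hT1x1 : ∑ l ∈ Finset.Icc (i+1+1) j, K l j
        ≤ ((j:ℤ) - (i:ℤ) - 1) * (lam (i+1) - ∑ t ∈ Finset.Icc (j+1) n, K (i+1) t) := by
      calc ∑ l ∈ Finset.Icc (i+1+1) j, K l j
          ≤ ∑ _l ∈ Finset.Icc (i+1+1) j,
              (lam (i+1) - ∑ t ∈ Finset.Icc (j+1) n, K (i+1) t) := by
            refine Finset.sum_le_sum fun l hl => ?_
            have hm' := Finset.mem_Icc.mp hl
            exact le_trans (hbig l (by omega) (by omega)).2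
              (chain (i+1) (by omega) l (by omega) (by omega))
        _ = ((j:ℤ) - (i:ℤ) - 1) * (lam (i+1) - ∑ t ∈ Finset.Icc (j+1) n, K (i+1) t) := by
            rw [Finset.sum_const, Nat.card_Icc, nsmul_eq_mul]
            congr 1
            omega
    -- goal: K i j ≤ (x - x1) + K1
    have main : K i j ≤ (lam i - ∑ t ∈ Finset.Icc (j+1) n, K i t)
        - (lam (i+1) - ∑ t ∈ Finset.Icc (j+1) n, K (i+1) t) + K (i+1) j := by
      by_cases hcase : (m:ℤ) ≤ (lam i - ∑ t ∈ Finset.Icc (j+1) n, K i t)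
          - (lam (i+1) - ∑ t ∈ Finset.Icc (j+1) n, K (i+1) t) + K (i+1) j
      · rw [hKij]; exact le_trans (min_le_left _ _) hcase
      · push_neg at hcase
        have hK1lt : K (i+1) j < (m:ℤ) := by linarith
        have hK1rec := hK (i+1) j (by omega) (by omega) hjn
        have hden1 : (j : ℚ) - ((i+1 : ℕ) : ℚ) + 1 = (((j:ℤ) - (i:ℤ) : ℤ) : ℚ) := by
          push_cast; ring
        rw [hden1] at hK1rec
        have hD1 : 0 < (j:ℤ) - (i:ℤ) := by omega
        have hK1eq : K (i+1) j
            = ⌈(((lam (i+1) - ∑ l ∈ Finset.Icc (j + 1) n, K (i+1) l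
                + ∑ l ∈ Finset.Icc (i + 1 + 1) j, K l j : ℤ) : ℚ)
              / (((j:ℤ) - (i:ℤ) : ℤ) : ℚ))⌉ := by
          omega
        have key : lam (i+1) - ∑ l ∈ Finset.Icc (j + 1) n, K (i+1) l
            + ∑ l ∈ Finset.Icc (i + 1 + 1) j, K l j
            ≤ ((j:ℤ) - (i:ℤ)) * K (i+1) j := by
          rw [hK1eq]
          exact le_mul_ceil' hD1
        rw [hKij]
        refine le_trans (min_le_right _ _) (ceil_div_le' hD ?_)
        have hprod : 0 ≤ ((j:ℤ) - (i:ℤ))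
            * ((lam i - ∑ t ∈ Finset.Icc (j+1) n, K i t)
               - (lam (i+1) - ∑ t ∈ Finset.Icc (j+1) n, K (i+1) t)) :=
          mul_nonneg (by omega) (by linarith)
        nlinarith [key, hTsplit, hprod]
    linarith
end

section
/- For every λ ∈ P^m_n and all 1 ≤ i < j ≤ n, one has k_{i,j}(λ) ≥ k_{i+1,j}(λ); that is, for fixed second index j the recursively defined entries weakly decrease in the first index. -/
/- Auxiliary lemmas -/

private lemma sum_Icc_bot (f : ℕ → ℤ) (a b : ℕ) (h : a ≤ b) :
    ∑ l ∈ Finset.Icc a b, f l = f a + ∑ l ∈ Finset.Icc (a+1) b, f l := by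
  rw [Finset.Icc_add_one_left_eq_Ioc, Finset.Icc_eq_cons_Ioc h, Finset.sum_cons]

private lemma ceil_le_of (a t d : ℤ) (hd : 0 < d) (h : a ≤ d * t) : ⌈(a:ℚ)/(d:ℚ)⌉ ≤ t := by
  rw [Int.ceil_le, div_le_iff₀ (by exact_mod_cast hd)]
  exact_mod_cast (by linarith : a ≤ t * d)

private lemma le_ceil_of (a t d : ℤ) (hd : 0 < d) (h : d * (t-1) < a) : t ≤ ⌈(a:ℚ)/(d:ℚ)⌉ := by
  have h2 : (t - 1 : ℤ) < ⌈(a:ℚ)/(d:ℚ)⌉ := by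
    rw [Int.lt_ceil, lt_div_iff₀ (by exact_mod_cast hd)]
    exact_mod_cast (by linarith : (t-1) * d < a)
  omega

private lemma lt_of_le_ceil (a t d : ℤ) (hd : 0 < d) (h : t ≤ ⌈(a:ℚ)/(d:ℚ)⌉) :
    d * (t-1) < a := by
  have h2 : ((t:ℚ) - 1) < (a:ℚ)/(d:ℚ) := by
    have : (t - 1 : ℤ) < ⌈(a:ℚ)/(d:ℚ)⌉ := by omega
    rw [Int.lt_ceil] at this
    exact_mod_cast this
  rw [lt_div_iff₀ (by exact_mod_cast hd)] at h2
  exact_mod_cast (by linarith : ((d:ℚ) * (t - 1) : ℚ) < a)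

private lemma of_ceil_le (a t d : ℤ) (hd : 0 < d) (h : ⌈(a:ℚ)/(d:ℚ)⌉ ≤ t) : a ≤ d * t := by
  rw [Int.ceil_le, div_le_iff₀ (by exact_mod_cast hd)] at h
  exact_mod_cast (by linarith : (a:ℚ) ≤ (d:ℚ) * t)

/-- Key lemma: assuming the row-remainder comparison at column `j`, we get both
column monotonicity at `(i,j)` and the bound on the difference. -/
private lemma key (n m : ℕ) (lam : ℕ → ℤ) (K : ℕ → ℕ → ℤ) (hK : TableauRec n m lam K)
    (i j : ℕ) (h1 : 1 ≤ i) (hij : i < j) (hjn : j ≤ n)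
    (hΔ : lam (i+1) - ∑ l ∈ Finset.Icc (j+1) n, K (i+1) l ≤
          lam i - ∑ l ∈ Finset.Icc (j+1) n, K i l) :
    K (i+1) j ≤ K i j ∧
    K i j - K (i+1) j ≤ (lam i - ∑ l ∈ Finset.Icc (j+1) n, K i l)
      - (lam (i+1) - ∑ l ∈ Finset.Icc (j+1) n, K (i+1) l) := by
  set A := ∑ l ∈ Finset.Icc (j+1) n, K i l with hA
  set B := ∑ l ∈ Finset.Icc (j+1) n, K (i+1) l with hB
  set Cc := ∑ l ∈ Finset.Icc (i+1+1) j, K l j with hCc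
  set d' : ℤ := (j:ℤ) - (i:ℤ) with hd'def
  have hd' : (0:ℤ) < d' := by
    have : (i:ℤ) < (j:ℤ) := by exact_mod_cast hij
    omega
  have hd : (0:ℤ) < d' + 1 := by omega
  -- recursion for row i
  have hKi : K i j = min (m:ℤ)
      ⌈(((lam i - A + (K (i+1) j + Cc) : ℤ) : ℚ) / (((d' + 1 : ℤ)):ℚ))⌉ := by
    have h := hK i j h1 (le_of_lt hij) hjn
    rw [sum_Icc_bot (fun l => K l j) (i+1) j hij] at h
    have e1 : ((j : ℚ) - (i : ℚ) + 1) = ((d' + 1 : ℤ) : ℚ) := by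
      rw [hd'def]; push_cast; ring
    rw [h, e1]
  -- recursion for row i+1
  have hKi1 : K (i+1) j = min (m:ℤ)
      ⌈(((lam (i+1) - B + Cc : ℤ) : ℚ) / ((d' : ℤ):ℚ))⌉ := by
    have h := hK (i+1) j (by omega) hij hjn
    have e2 : ((j : ℚ) - ((i+1 : ℕ) : ℚ) + 1) = ((d' : ℤ) : ℚ) := by
      rw [hd'def]; push_cast; ring
    rw [h, e2]
  set t := K (i+1) j with ht
  set a' : ℤ := lam (i+1) - B + Cc with ha'
  set aa : ℤ := lam i - A + (t + Cc) with haa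
  have ht_m : t ≤ (m:ℤ) := by rw [hKi1]; exact min_le_left _ _
  have ht_ceil : t ≤ ⌈((a':ℤ):ℚ) / ((d':ℤ):ℚ)⌉ := by
    rw [hKi1]; exact min_le_right _ _
  have hlow : d' * (t - 1) < a' := lt_of_le_ceil a' t d' hd' ht_ceil
  constructor
  · -- monotonicity
    have h2 : (d' + 1) * (t - 1) < aa := by
      have : a' + t ≤ aa := by simp only [ha', haa]; linarith
      nlinarith
    have : t ≤ ⌈((aa:ℤ):ℚ) / ((d' + 1 : ℤ):ℚ)⌉ := le_ceil_of aa t (d'+1) hd h2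
    rw [hKi]
    exact le_min ht_m this
  · -- difference bound
    have hKile : K i j ≤ (m:ℤ) := by rw [hKi]; exact min_le_left _ _
    have hKceil : K i j ≤ ⌈((aa:ℤ):ℚ) / ((d' + 1 : ℤ):ℚ)⌉ := by
      rw [hKi]; exact min_le_right _ _
    set Δ : ℤ := (lam i - A) - (lam (i+1) - B) with hΔdef
    have hΔ0 : 0 ≤ Δ := by omega
    rcases le_or_gt ((m:ℤ)) ⌈((a':ℤ):ℚ) / ((d':ℤ):ℚ)⌉ with hcase | hcase
    · -- t = m
      have : t = (m:ℤ) := by rw [hKi1]; exact min_eq_left hcase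
      omega
    · -- t = ceiling
      have htc : t = ⌈((a':ℤ):ℚ) / ((d':ℤ):ℚ)⌉ := by
        rw [hKi1]; exact min_eq_right hcase.le
      have hup : a' ≤ d' * t := of_ceil_le a' t d' hd' (le_of_eq htc.symm)
      have haaup : aa ≤ (d' + 1) * (t + Δ) := by nlinarith
      have : K i j ≤ t + Δ :=
        hKceil.trans (ceil_le_of aa (t + Δ) (d'+1) hd haaup)
      omega

private lemma Tmono (n m : ℕ) (lam : ℕ → ℤ) (K : ℕ → ℕ → ℤ)
    (hlam : IsTypeAPartition n m lam) (hK : TableauRec n m lam K)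
    (i : ℕ) (h1 : 1 ≤ i) (hin : i < n) :
    ∀ dj j : ℕ, j + dj = n → i ≤ j →
      lam (i+1) - ∑ l ∈ Finset.Icc (j+1) n, K (i+1) l ≤
      lam i - ∑ l ∈ Finset.Icc (j+1) n, K i l := by
  intro dj
  induction dj with
  | zero =>
    intro j hj _
    have hjn : j = n := by omega
    subst hjn
    rw [Finset.Icc_eq_empty (by omega : ¬ j + 1 ≤ j)]
    simpa using hlam.2 i h1 hin
  | succ d ih =>
    intro j hj hij
    have hIH := ih (j+1) (by omega) (by omega)
    have hkey := (key n m lam K hK i (j+1) h1 (by omega) (by omega) hIH).2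
    rw [sum_Icc_bot (fun l => K i l) (j+1) n (by omega),
        sum_Icc_bot (fun l => K (i+1) l) (j+1) n (by omega)]
    linarith

/-- For every `lam ∈ P^m_n` and all `1 ≤ i < j ≤ n`, one has
`k_{i,j}(lam) ≥ k_{i+1,j}(lam)`: for fixed second index the entries weakly decrease in
the first index. -/
theorem tableau_columns_decrease (n m : ℕ) (hn : 1 ≤ n) (hm : 1 ≤ m)
    (lam : ℕ → ℤ) (hlam : IsTypeAPartition n m lam)
    (K : ℕ → ℕ → ℤ) (hK : TableauRec n m lam K) :
    ∀ i j : ℕ, 1 ≤ i → i < j → j ≤ n → K (i + 1) j ≤ K i j := by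
  intro i j h1 hij hjn
  exact (key n m lam K hK i j h1 hij hjn
    (Tmono n m lam K hlam hK i h1 (lt_of_lt_of_le hij hjn) (n - j) j (by omega)
      (le_of_lt hij))).1
end
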